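/- arXiv:1310.0254 — 3 statements merged into one kernel-verified Lean document; each statement's English description precedes it below -/
import Mathlib

section
/- Let H be a real separable Hilbert space decomposed as the orthogonal direct sum of closed subspaces (H_k)_{k≥0}. Then the symmetric tensor power H^{⊙n} is the orthogonal direct sum, over all sequences α = (α_0, α_1, ...) of nonnegative integers with finite sum |α| = n, of the subspaces H_0^{⊙α_0} ⊙ H_1^{⊙α_1} ⊙ H_2^{⊙α_2} ⊙ ··· . -/
/-!
If two multiplicity vectors differ, every term of the double sum over permutations defining
`⟪Sym (tp f), Sym (tp g)⟫` pairs a factor from some `Hk j` with a factor from some `Hk j'`,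
`j ≠ j'`, so it vanishes; orthogonality passes to spans and closures.

For density, `⟪tp f, tp g⟫ = ∏ ⟪f i, g i⟫` alone forces `tp` to be multilinear (the squared
norm of each defect such as `tp (update f i (x + y)) - tp (update f i x) - tp (update f i y)`
expands into products of inner products that cancel) and bounded, hence continuous. Expanding
every factor along `⨆ k, Hk k` then puts `Sym (tp g)` in the span of the `Sub α` for `g` in a
dense set, hence in its closure for all `g`, and the elementary tensors span a dense subspace.
-/

open scoped RealInnerProductSpace
open Finset

namespace Submodule

variable {E : Type*} [NormedAddCommGroup E] [InnerProductSpace ℝ E]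

theorem IsOrtho.topologicalClosure {U V : Submodule ℝ E} (h : U ⟂ V) :
    U.topologicalClosure ⟂ V.topologicalClosure := by
  rw [isOrtho_iff_le, orthogonal_closure]
  exact topologicalClosure_minimal _ h (isClosed_orthogonal _)

end Submodule

section InnerProdMap

variable {ι E F : Type*} [Fintype ι]
  [NormedAddCommGroup E] [InnerProductSpace ℝ E] [NormedAddCommGroup F] [InnerProductSpace ℝ F]
  {tp : (ι → E) → F}

theorem prod_inner_update [DecidableEq ι] (f : ι → E) (i : ι) (x y : E) :
    ∏ j, ⟪Function.update f i x j, Function.update f i y j⟫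
      = ⟪x, y⟫ * ∏ j ∈ univ.erase i, ⟪f j, f j⟫ := by
  rw [← mul_prod_erase _ _ (mem_univ i), Function.update_self, Function.update_self]
  congr 1
  refine prod_congr rfl fun j hj => ?_
  rw [Function.update_of_ne (ne_of_mem_erase hj), Function.update_of_ne (ne_of_mem_erase hj)]

variable (htp : ∀ f g : ι → E, ⟪tp f, tp g⟫ = ∏ i, ⟪f i, g i⟫)
include htp

theorem map_update_add_of_inner_eq_prod [DecidableEq ι] (f : ι → E) (i : ι) (x y : E) :
    tp (Function.update f i (x + y))
      = tp (Function.update f i x) + tp (Function.update f i y) := by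
  rw [← sub_eq_zero, ← inner_self_eq_zero (𝕜 := ℝ)]
  simp only [inner_sub_left, inner_sub_right, inner_add_left, inner_add_right, htp,
    prod_inner_update]
  ring

theorem map_update_smul_of_inner_eq_prod [DecidableEq ι] (f : ι → E) (i : ι) (r : ℝ) (x : E) :
    tp (Function.update f i (r • x)) = r • tp (Function.update f i x) := by
  rw [← sub_eq_zero, ← inner_self_eq_zero (𝕜 := ℝ)]
  simp only [inner_sub_left, inner_sub_right, real_inner_smul_left, real_inner_smul_right, htp,
    prod_inner_update]
  ring

theorem norm_eq_prod_of_inner_eq_prod (f : ι → E) : ‖tp f‖ = ∏ i, ‖f i‖ := by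
  have hsq : ‖tp f‖ ^ 2 = (∏ i, ‖f i‖) ^ 2 := by
    rw [← real_inner_self_eq_norm_sq, htp, ← prod_pow]
    exact prod_congr rfl fun i _ => real_inner_self_eq_norm_sq _
  exact (pow_left_inj₀ (norm_nonneg _) (prod_nonneg fun i _ => norm_nonneg _) two_ne_zero).mp hsq

noncomputable def multilinearMapOfInnerEqProd : MultilinearMap ℝ (fun _ : ι => E) F where
  toFun := tp
  map_update_add' := map_update_add_of_inner_eq_prod htp
  map_update_smul' := map_update_smul_of_inner_eq_prod htp

theorem continuous_of_inner_eq_prod : Continuous tp :=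
  ((multilinearMapOfInnerEqProd htp).mkContinuous 1 fun f => by
    rw [one_mul]; exact (norm_eq_prod_of_inner_eq_prod htp f).le).cont

end InnerProdMap

theorem ContinuousLinearMap.range_le_topologicalClosure_of_dense_span {R E F : Type*}
    [Semiring R] [AddCommMonoid E] [TopologicalSpace E] [Module R E] [ContinuousAdd E]
    [ContinuousConstSMul R E]
    [AddCommMonoid F] [TopologicalSpace F] [Module R F] [ContinuousAdd F] [ContinuousConstSMul R F]
    (L : E →L[R] F) {s : Set E} (hs : (Submodule.span R s).topologicalClosure = ⊤)
    {K : Submodule R F} (h : ∀ x ∈ s, L x ∈ K.topologicalClosure) :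
    LinearMap.range L.toLinearMap ≤ K.topologicalClosure := by
  have hcomap : ⊤ ≤ K.topologicalClosure.comap L.toLinearMap :=
    hs ▸ Submodule.topologicalClosure_minimal _ (Submodule.span_le.mpr h)
      (K.isClosed_topologicalClosure.preimage L.continuous)
  rintro _ ⟨x, rfl⟩
  exact hcomap trivial

theorem MultilinearMap.map_mem_of_forall_mem_iSup {R ι κ E F : Type*} [CommSemiring R] [Fintype ι]
    [AddCommMonoid E] [Module R E] [AddCommMonoid F] [Module R F]
    (M : MultilinearMap R (fun _ : ι => E) F) {p : κ → Submodule R E} {K : Submodule R F}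
    (hM : ∀ (c : ι → κ) (f : ι → E), (∀ i, f i ∈ p (c i)) → M f ∈ K)
    {g : ι → E} (hg : ∀ i, g i ∈ ⨆ k, p k) : M g ∈ K := by
  classical
  choose x hx hsum using fun i => (Submodule.mem_iSup_iff_exists_finsupp p (g i)).mp (hg i)
  have hg_eq : g = fun i => ∑ k ∈ (x i).support, x i k := funext fun i => (hsum i).symm
  rw [hg_eq, M.map_sum_finset]
  exact K.sum_mem fun r _ => hM r _ fun i => hx i (r i)

theorem prod_inner_eq_zero_of_ne {ι κ E : Type*} [Fintype ι]
    [NormedAddCommGroup E] [InnerProductSpace ℝ E] {Hk : κ → Submodule ℝ E}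
    (horth : ∀ j j', j ≠ j' → ∀ x ∈ Hk j, ∀ y ∈ Hk j', ⟪x, y⟫ = 0)
    {c d : ι → κ} {f g : ι → E} (hf : ∀ i, f i ∈ Hk (c i)) (hg : ∀ i, g i ∈ Hk (d i))
    (hcd : c ≠ d) : ∏ i, ⟪f i, g i⟫ = 0 := by
  obtain ⟨i, hi⟩ := Function.ne_iff.mp hcd
  exact prod_eq_zero (mem_univ i) (horth _ _ hi _ (hf i) _ (hg i))

theorem card_filter_comp_perm {ι κ : Type*} [Fintype ι] [DecidableEq κ]
    (c : ι → κ) (σ : Equiv.Perm ι) (j : κ) :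
    (univ.filter fun i => c (σ i) = j).card = (univ.filter fun i => c i = j).card :=
  card_bij' (fun i _ => σ i) (fun i _ => σ.symm i) (by simp) (by simp) (by simp) (by simp)

section TensorsOfType

variable {κ H T : Type*} [DecidableEq κ] [AddCommMonoid H] [Module ℝ H]
  {Hk : κ → Submodule ℝ H} {n : ℕ} {tp : (Fin n → H) → T}

variable (Hk tp) in
def tensorsOfType (α : κ →₀ ℕ) : Set T :=
  {t | ∃ c : Fin n → κ, ∃ f : Fin n → H,
    (∀ j, (univ.filter fun i => c i = j).card = α j) ∧ (∀ i, f i ∈ Hk (c i)) ∧ t = tp f}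

theorem tp_mem_tensorsOfType {c : Fin n → κ} {f : Fin n → H} (hf : ∀ i, f i ∈ Hk (c i)) :
    tp f ∈ tensorsOfType Hk tp (univ.val.map c).toFinsupp :=
  ⟨c, f, fun j => by
    rw [Multiset.toFinsupp_apply, Multiset.count_map, card_def, filter_val]
    simp only [eq_comm], hf, rfl⟩

theorem sum_toFinsupp_map_univ (c : Fin n → κ) :
    ((univ.val.map c).toFinsupp.sum fun _ m => m) = n :=
  (Multiset.toFinsupp_sum_eq _).trans (by simp)

end TensorsOfType

theorem inner_symmetrize_eq_zero {H T : Type*} [NormedAddCommGroup T] [InnerProductSpace ℝ T]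
    {n : ℕ} {tp : (Fin n → H) → T} {Sym : T → T}
    (hSym : ∀ f : Fin n → H,
      Sym (tp f) = ((n.factorial : ℝ))⁻¹ • ∑ σ : Equiv.Perm (Fin n), tp (fun i => f (σ i)))
    {f g : Fin n → H}
    (h : ∀ σ τ : Equiv.Perm (Fin n), ⟪tp (fun i => f (σ i)), tp (fun i => g (τ i))⟫ = 0) :
    ⟪Sym (tp f), Sym (tp g)⟫ = 0 := by
  rw [hSym f, hSym g, real_inner_smul_left, real_inner_smul_right, sum_inner]
  simp only [inner_sum, h, sum_const_zero, mul_zero]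

section Symmetrization

variable {κ H T : Type*} [DecidableEq κ]
  [NormedAddCommGroup H] [InnerProductSpace ℝ H] [NormedAddCommGroup T] [InnerProductSpace ℝ T]
  {Hk : κ → Submodule ℝ H} {n : ℕ} {tp : (Fin n → H) → T} {Sym : T → T}
  (hSym : ∀ f : Fin n → H,
    Sym (tp f) = ((n.factorial : ℝ))⁻¹ • ∑ σ : Equiv.Perm (Fin n), tp (fun i => f (σ i)))
include hSym

theorem inner_symmetrize_eq_zero_of_card_ne
    (htp : ∀ f g : Fin n → H, ⟪tp f, tp g⟫ = ∏ i, ⟪f i, g i⟫)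
    (horth : ∀ j j', j ≠ j' → ∀ x ∈ Hk j, ∀ y ∈ Hk j', ⟪x, y⟫ = 0)
    {c d : Fin n → κ} {f g : Fin n → H} (hf : ∀ i, f i ∈ Hk (c i)) (hg : ∀ i, g i ∈ Hk (d i))
    {j : κ} (hj : (univ.filter fun i => c i = j).card ≠ (univ.filter fun i => d i = j).card) :
    ⟪Sym (tp f), Sym (tp g)⟫ = 0 := by
  refine inner_symmetrize_eq_zero hSym fun σ τ => ?_
  rw [htp]
  refine prod_inner_eq_zero_of_ne horth (c := c ∘ σ) (d := d ∘ τ) (fun i => hf (σ i))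
    (fun i => hg (τ i)) fun hcd => hj ?_
  rw [← card_filter_comp_perm c σ, ← card_filter_comp_perm d τ]
  exact congrArg (fun e : Fin n → κ => (univ.filter fun i => e i = j).card) hcd

theorem isOrtho_span_image_tensorsOfType
    (htp : ∀ f g : Fin n → H, ⟪tp f, tp g⟫ = ∏ i, ⟪f i, g i⟫)
    (horth : ∀ j j', j ≠ j' → ∀ x ∈ Hk j, ∀ y ∈ Hk j', ⟪x, y⟫ = 0)
    {α β : κ →₀ ℕ} (hαβ : α ≠ β) :
    Submodule.span ℝ (Sym '' tensorsOfType Hk tp α)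
      ⟂ Submodule.span ℝ (Sym '' tensorsOfType Hk tp β) := by
  rw [Submodule.isOrtho_span]
  rintro _ ⟨_, ⟨c, f, hc, hf, rfl⟩, rfl⟩ _ ⟨_, ⟨d, g, hd, hg, rfl⟩, rfl⟩
  obtain ⟨j, hj⟩ := Finsupp.ne_iff.mp hαβ
  exact inner_symmetrize_eq_zero_of_card_ne hSym htp horth hf hg (j := j) (by rwa [hc, hd])

end Symmetrization

theorem symmetrize_mem_topologicalClosure {κ H T : Type*}
    [NormedAddCommGroup H] [InnerProductSpace ℝ H] [NormedAddCommGroup T] [InnerProductSpace ℝ T]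
    {Hk : κ → Submodule ℝ H} (htotal : (⨆ j, Hk j).topologicalClosure = ⊤)
    {n : ℕ} {tp : (Fin n → H) → T} (htp : ∀ f g : Fin n → H, ⟪tp f, tp g⟫ = ∏ i, ⟪f i, g i⟫)
    (Sym : T →L[ℝ] T) {K : Submodule ℝ T}
    (hK : ∀ (c : Fin n → κ) (f : Fin n → H), (∀ i, f i ∈ Hk (c i)) → Sym (tp f) ∈ K)
    (g : Fin n → H) : Sym (tp g) ∈ K.topologicalClosure := by
  have hdense : Dense (Set.univ.pi fun _ : Fin n => ((⨆ j, Hk j : Submodule ℝ H) : Set H)) :=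
    dense_pi _ fun _ _ => Submodule.dense_iff_topologicalClosure_eq_top.mpr htotal
  have hclosed : IsClosed {g | Sym (tp g) ∈ K.topologicalClosure} :=
    K.isClosed_topologicalClosure.preimage (Sym.continuous.comp (continuous_of_inner_eq_prod htp))
  refine hdense.induction (fun g hg => K.le_topologicalClosure ?_) hclosed g
  exact (Sym.toLinearMap.compMultilinearMap (multilinearMapOfInnerEqProd htp))
    |>.map_mem_of_forall_mem_iSup hK fun i => hg i (Set.mem_univ i)

theorem statement3_general
    {H T : Type*} [NormedAddCommGroup H] [InnerProductSpace ℝ H]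
    [NormedAddCommGroup T] [InnerProductSpace ℝ T]
    (Hk : ℕ → Submodule ℝ H)
    (horth : ∀ j j', j ≠ j' → ∀ x ∈ Hk j, ∀ y ∈ Hk j', ⟪x, y⟫ = 0)
    (htotal : (⨆ j, Hk j).topologicalClosure = ⊤)
    (n : ℕ)
    (tp : (Fin n → H) → T)
    (htp : ∀ f g : Fin n → H, ⟪tp f, tp g⟫ = ∏ i, ⟪f i, g i⟫)
    (htptotal : (Submodule.span ℝ (Set.range tp)).topologicalClosure = ⊤)
    (Sym : T →L[ℝ] T)
    (hSym : ∀ f : Fin n → H,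
      Sym (tp f) = ((n.factorial : ℝ))⁻¹ • ∑ σ : Equiv.Perm (Fin n), tp (fun i => f (σ i)))
    (Sub : (ℕ →₀ ℕ) → Submodule ℝ T)
    (hSub : ∀ α : ℕ →₀ ℕ, Sub α
      = (Submodule.span ℝ (Sym '' {t | ∃ c : Fin n → ℕ, ∃ f : Fin n → H,
          (∀ j, (Finset.univ.filter fun i => c i = j).card = α j)
            ∧ (∀ i, f i ∈ Hk (c i)) ∧ t = tp f})).topologicalClosure) :
    (∀ α β : ℕ →₀ ℕ, (α.sum fun _ m => m) = n → (β.sum fun _ m => m) = n → α ≠ β →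
        ∀ u ∈ Sub α, ∀ v ∈ Sub β, ⟪u, v⟫ = 0)
      ∧ (⨆ α ∈ {α : ℕ →₀ ℕ | (α.sum fun _ m => m) = n}, Sub α).topologicalClosure
          = (LinearMap.range Sym.toLinearMap).topologicalClosure := by
  have hSub_eq (α : ℕ →₀ ℕ) :
      Sub α = (Submodule.span ℝ (Sym '' tensorsOfType Hk tp α)).topologicalClosure := hSub α
  set K := ⨆ α ∈ {α : ℕ →₀ ℕ | (α.sum fun _ m => m) = n}, Sub α
  have hK_le : K ≤ (LinearMap.range Sym.toLinearMap).topologicalClosure :=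
    iSup₂_le fun α _ => hSub_eq α ▸ Submodule.topologicalClosure_mono
      (Submodule.span_le.mpr (Set.image_subset_range _ _))
  have hmem_K (c : Fin n → ℕ) (f : Fin n → H) (hf : ∀ i, f i ∈ Hk (c i)) : Sym (tp f) ∈ K :=
    le_iSup₂ (f := fun α _ => Sub α) _ (sum_toFinsupp_map_univ c) <| hSub_eq _ ▸
      Submodule.le_topologicalClosure _ (Submodule.subset_span ⟨_, tp_mem_tensorsOfType hf, rfl⟩)
  refine ⟨fun α β _ _ hαβ u hu v hv => ?_, le_antisymm ?_ ?_⟩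
  · rw [hSub_eq] at hu hv
    exact (isOrtho_span_image_tensorsOfType hSym htp horth hαβ).topologicalClosure.inner_eq hu hv
  · exact Submodule.topologicalClosure_minimal _ hK_le (Submodule.isClosed_topologicalClosure _)
  · refine Submodule.topologicalClosure_minimal _ ?_ (Submodule.isClosed_topologicalClosure _)
    refine Sym.range_le_topologicalClosure_of_dense_span htptotal ?_
    rintro _ ⟨g, rfl⟩
    exact symmetrize_mem_topologicalClosure htotal htp Sym hmem_K g

/-- `H^{⊙n}` is the orthogonal direct sum, over multi-indices `α` with
`|α| = n`, of the subspaces `H_0^{⊙α_0} ⊙ H_1^{⊙α_1} ⊙ ⋯`. The subspace attached to `α`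
is the closure of the span of symmetrized elementary tensors whose factors lie in the
`H_k`'s with multiplicities given by `α`. -/
theorem statement3
    {H T : Type*} [NormedAddCommGroup H] [InnerProductSpace ℝ H]
    [CompleteSpace H] [TopologicalSpace.SeparableSpace H]
    [NormedAddCommGroup T] [InnerProductSpace ℝ T] [CompleteSpace T]
    (Hk : ℕ → Submodule ℝ H)
    (hclosed : ∀ j, IsClosed (Hk j : Set H))
    (horth : ∀ j j', j ≠ j' → ∀ x ∈ Hk j, ∀ y ∈ Hk j', ⟪x, y⟫ = 0)
    (htotal : (⨆ j, Hk j).topologicalClosure = ⊤)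
    (n : ℕ)
    (tp : (Fin n → H) → T)
    (htp : ∀ f g : Fin n → H, ⟪tp f, tp g⟫ = ∏ i, ⟪f i, g i⟫)
    (htptotal : (Submodule.span ℝ (Set.range tp)).topologicalClosure = ⊤)
    (Sym : T →L[ℝ] T)
    (hSym : ∀ f : Fin n → H,
      Sym (tp f) = ((n.factorial : ℝ))⁻¹ • ∑ σ : Equiv.Perm (Fin n), tp (fun i => f (σ i)))
    (Sub : (ℕ →₀ ℕ) → Submodule ℝ T)
    (hSub : ∀ α : ℕ →₀ ℕ, Sub α
      = (Submodule.span ℝ (Sym '' {t | ∃ c : Fin n → ℕ, ∃ f : Fin n → H,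
          (∀ j, (Finset.univ.filter fun i => c i = j).card = α j)
            ∧ (∀ i, f i ∈ Hk (c i)) ∧ t = tp f})).topologicalClosure) :
    (∀ α β : ℕ →₀ ℕ, (α.sum fun _ m => m) = n → (β.sum fun _ m => m) = n → α ≠ β →
        ∀ u ∈ Sub α, ∀ v ∈ Sub β, ⟪u, v⟫ = 0)
      ∧ (⨆ α ∈ {α : ℕ →₀ ℕ | (α.sum fun _ m => m) = n}, Sub α).topologicalClosure
          = (LinearMap.range Sym.toLinearMap).topologicalClosure :=
  statement3_general Hk horth htotal n tp htp htptotal Sym hSym Sub hSub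
end

section
/- Let H be a real separable Hilbert space decomposed as the orthogonal direct sum of closed subspaces (H_k)_{k≥0}, and let α = (α_0, α_1, ...) be a multi-index of nonnegative integers with |α| = n < ∞. Then the restriction of the symmetrization projection Sym_n to the subspace H_0^{⊙α_0} ⊗ H_1^{⊙α_1} ⊗ H_2^{⊙α_2} ⊗ ··· of H^{⊗n}, viewed as a map into H^{⊙n}, is injective with closed image H_0^{⊙α_0} ⊙ H_1^{⊙α_1} ⊙ ···, and scales norms by the constant factor (α_0! α_1! α_2! ··· / n!)^{1/2}; i.e., after rescaling the inner products on domain by α_0!α_1!··· and on codomain by n!, it is a unitary operator. -/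
open scoped RealInnerProductSpace BigOperators
open Finset

/-!
Let `b f` be the average of the elementary tensors `tp (f ∘ σ)` over the Young subgroup
`S_α = {σ | c ∘ σ = c}`, so that `D` is the closed span of the `b f` with `f i ∈ H_{c i}`.
For two such block-adapted `f, h`, orthogonality of the `H_k` kills `∏ i, ⟪f (ρ i), h i⟫`
unless `ρ ∈ S_α`. Hence both `⟪Sym (b f), Sym (b h)⟫ = ⟪Sym (tp f), Sym (tp h)⟫` and
`⟪b f, b h⟫` are multiples of the same sum over `S_α`, namely with factors `1 / n!` and
`1 / |S_α|`, and `|S_α| = ∏ α_j!`. So `Sym` multiplies inner products of generators by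
`α! / n!`; by continuity it does so on all of `D`, where it is therefore a multiple of an
isometry: injective, with complete (hence closed) image, namely the closed span of
the `Sym (b f) = Sym (tp f)`.
-/

open Equiv

section ScaledIsometry

variable {𝕜 E F : Type*} [NontriviallyNormedField 𝕜] [NormedAddCommGroup E] [NormedSpace 𝕜 E]
  [NormedAddCommGroup F] [NormedSpace 𝕜 F] {A : E →L[𝕜] F} {D : Submodule 𝕜 E} {s : ℝ}

theorem injOn_of_norm_map_eq_mul (hs : s ≠ 0) (hA : ∀ u ∈ D, ‖A u‖ = s * ‖u‖) :
    Set.InjOn A D := fun u hu v hv huv => by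
  have h := hA (u - v) (D.sub_mem hu hv)
  rw [map_sub, huv, sub_self, norm_zero, eq_comm, mul_eq_zero, norm_eq_zero, sub_eq_zero] at h
  exact h.resolve_left hs

theorem isClosed_image_of_norm_map_eq_mul [CompleteSpace E] (hD : IsClosed (D : Set E))
    (hs : 0 < s) (hA : ∀ u ∈ D, ‖A u‖ = s * ‖u‖) : IsClosed (A '' D) := by
  have : CompleteSpace D := hD.completeSpace_coe
  have hanti : AntilipschitzWith (Real.toNNReal s⁻¹) (A.comp D.subtypeL) :=
    ContinuousLinearMap.antilipschitz_of_bound _ fun u => by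
      rw [Real.coe_toNNReal _ (inv_nonneg.2 hs.le), ContinuousLinearMap.comp_apply,
        Submodule.subtypeL_apply, hA u u.2, inv_mul_cancel_left₀ hs.ne']
      rfl
  convert hanti.isClosed_range (A.comp D.subtypeL).uniformContinuous using 1
  rw [ContinuousLinearMap.coe_comp, Submodule.coe_subtypeL, Submodule.coe_subtype, Set.range_comp,
    Subtype.range_coe]

end ScaledIsometry

section InnerScaling

variable {E F : Type*} [NormedAddCommGroup E] [InnerProductSpace ℝ E]
  [NormedAddCommGroup F] [InnerProductSpace ℝ F] {A : E →L[ℝ] F} {S : Set E} {r : ℝ}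

theorem inner_map_map_of_mem_topologicalClosure_span
    (hS : ∀ u ∈ S, ∀ v ∈ S, ⟪A u, A v⟫ = r * ⟪u, v⟫) :
    ∀ u ∈ (Submodule.span ℝ S).topologicalClosure,
      ∀ v ∈ (Submodule.span ℝ S).topologicalClosure, ⟪A u, A v⟫ = r * ⟪u, v⟫ := by
  have extend : ∀ u, (∀ v ∈ S, ⟪A u, A v⟫ = r * ⟪u, v⟫) →
      ∀ v ∈ (Submodule.span ℝ S).topologicalClosure, ⟪A u, A v⟫ = r * ⟪u, v⟫ :=
    fun u hu => ContinuousLinearMap.eqOn_closure_span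
      (f := (innerSL ℝ (A u)).comp A) (g := r • innerSL ℝ u) fun v hv => by simpa using hu v hv
  intro u hu v hv
  have h := extend v (fun w hw => by
    rw [real_inner_comm, real_inner_comm w]; exact extend w (hS w hw) v hv) u hu
  rwa [real_inner_comm (A u), real_inner_comm u] at h

theorem norm_map_of_mem_topologicalClosure_span (hr : 0 ≤ r)
    (hS : ∀ u ∈ S, ∀ v ∈ S, ⟪A u, A v⟫ = r * ⟪u, v⟫) :
    ∀ u ∈ (Submodule.span ℝ S).topologicalClosure, ‖A u‖ = √r * ‖u‖ := by
  intro u hu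
  have h := inner_map_map_of_mem_topologicalClosure_span hS u hu u hu
  rw [real_inner_self_eq_norm_sq, real_inner_self_eq_norm_sq] at h
  rw [← Real.sqrt_sq (norm_nonneg (A u)), h, Real.sqrt_mul hr, Real.sqrt_sq (norm_nonneg u)]

theorem image_topologicalClosure_span [CompleteSpace E] (hr : 0 < r)
    (hS : ∀ u ∈ S, ∀ v ∈ S, ⟪A u, A v⟫ = r * ⟪u, v⟫) :
    A '' (Submodule.span ℝ S).topologicalClosure
      = (Submodule.span ℝ (A '' S)).topologicalClosure := by
  have hclosed := isClosed_image_of_norm_map_eq_mul (Submodule.isClosed_topologicalClosure _)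
    (Real.sqrt_pos.2 hr) (norm_map_of_mem_topologicalClosure_span hr.le hS)
  have hspan : (Submodule.span ℝ (A '' S) : Set F) = A '' Submodule.span ℝ S :=
    congrArg SetLike.coe (Submodule.map_span (A : E →ₗ[ℝ] F) S).symm
  refine Set.Subset.antisymm ?_ ?_
  · rw [Submodule.topologicalClosure_coe, Submodule.topologicalClosure_coe, hspan]
    exact image_closure_subset_closure_image A.continuous
  · rw [Submodule.topologicalClosure_coe, hspan]
    exact closure_minimal (Set.image_mono subset_closure) hclosed

end InnerScaling

def blockStabilizer {ι κ : Type*} (c : ι → κ) : Subgroup (Perm ι) where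
  carrier := {σ | ∀ i, c (σ i) = c i}
  mul_mem' hσ hτ i := (hσ _).trans (hτ i)
  one_mem' _ := rfl
  inv_mem' {σ} hσ i := by simpa using (hσ (σ⁻¹ i)).symm

theorem mem_blockStabilizer {ι κ : Type*} {c : ι → κ} {σ : Perm ι} :
    σ ∈ blockStabilizer c ↔ ∀ i, c (σ i) = c i :=
  Iff.rfl

section BlockStabilizer

variable {ι κ : Type*} [Fintype ι] [DecidableEq ι] [DecidableEq κ] {c : ι → κ}

instance : DecidablePred (· ∈ blockStabilizer c) :=
  fun σ => inferInstanceAs (Decidable (∀ i, c (σ i) = c i))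

theorem card_blockStabilizer {α : κ →₀ ℕ} (hc : ∀ j, #{i | c i = j} = α j) :
    Fintype.card (blockStabilizer c) = ∏ j ∈ α.support, (α j).factorial := by
  have himage : univ.image c = α.support := by
    ext j
    rw [Finsupp.mem_support_iff, ← hc, ← Nat.pos_iff_ne_zero, card_pos, filter_nonempty_iff]
    simp
  rw [Fintype.card_congr (Equiv.subtypeEquivRight (q := fun σ : Perm ι => c ∘ σ = c) fun σ => by
      rw [mem_blockStabilizer, funext_iff]; rfl),
    DomMulAct.stabilizer_card', himage]
  exact prod_congr rfl fun j _ => by rw [Fintype.card_subtype, hc]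

theorem sum_blockStabilizer_eq_sum_filter {M : Type*} [AddCommMonoid M] (g : Perm ι → M) :
    ∑ σ : blockStabilizer c, g σ
      = ∑ σ ∈ univ.filter (fun σ : Perm ι => ∀ i, c (σ i) = c i), g σ :=
  (Finset.sum_subtype _ (fun σ => by simp [mem_blockStabilizer]) g).symm

end BlockStabilizer

section Averaging

variable {ι H T Γ : Type*} [Group Γ] [Fintype Γ]

noncomputable def permAverage [AddCommGroup T] [Module ℝ T] (φ : Γ →* Perm ι)
    (tp : (ι → H) → T) (f : ι → H) : T :=
  (Fintype.card Γ : ℝ)⁻¹ • ∑ g, tp (fun i => f (φ g i))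

theorem permAverage_id_comp [Fintype ι] [DecidableEq ι] [AddCommGroup T] [Module ℝ T]
    (tp : (ι → H) → T) (f : ι → H) (σ : Perm ι) :
    permAverage (MonoidHom.id (Perm ι)) tp (fun i => f (σ i))
      = permAverage (MonoidHom.id (Perm ι)) tp f := by
  unfold permAverage
  congr 1
  exact Fintype.sum_equiv (Equiv.mulLeft σ) _ _ fun τ => rfl

theorem map_comp_perm_of_map_eq_permAverage [Fintype ι] [DecidableEq ι] [AddCommGroup T]
    [Module ℝ T] {tp : (ι → H) → T} {A : T →ₗ[ℝ] T}
    (hA : ∀ f, A (tp f) = permAverage (MonoidHom.id (Perm ι)) tp f) (f : ι → H) (σ : Perm ι) :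
    A (tp (fun i => f (σ i))) = A (tp f) := by
  rw [hA, hA, permAverage_id_comp]

theorem map_permAverage {T' : Type*} [AddCommGroup T] [Module ℝ T]
    [AddCommGroup T'] [Module ℝ T'] {tp : (ι → H) → T} {A : T →ₗ[ℝ] T'}
    (hA : ∀ f (σ : Perm ι), A (tp (fun i => f (σ i))) = A (tp f)) (φ : Γ →* Perm ι)
    (f : ι → H) : A (permAverage φ tp f) = A (tp f) := by
  rw [permAverage, map_smul, map_sum]
  simp only [hA, sum_const, card_univ, ← Nat.cast_smul_eq_nsmul ℝ, smul_smul]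
  rw [inv_mul_cancel₀ (by exact_mod_cast Fintype.card_ne_zero), one_smul]

theorem image_map_setOf_permAverage {T' : Type*} [AddCommGroup T] [Module ℝ T]
    [AddCommGroup T'] [Module ℝ T'] {tp : (ι → H) → T} {A : T →ₗ[ℝ] T'}
    (hA : ∀ f (σ : Perm ι), A (tp (fun i => f (σ i))) = A (tp f)) (φ : Γ →* Perm ι)
    (F : Set (ι → H)) :
    A '' {t | ∃ f ∈ F, t = permAverage φ tp f} = A '' {t | ∃ f ∈ F, t = tp f} := by
  ext x
  constructor <;> rintro ⟨_, ⟨f, hf, rfl⟩, rfl⟩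
  · exact ⟨tp f, ⟨f, hf, rfl⟩, (map_permAverage hA φ f).symm⟩
  · exact ⟨_, ⟨f, hf, rfl⟩, map_permAverage hA φ f⟩

variable [Fintype ι] [NormedAddCommGroup H] [InnerProductSpace ℝ H] [NormedAddCommGroup T]
  [InnerProductSpace ℝ T] {tp : (ι → H) → T}

theorem inner_permAverage (htp : ∀ f g, ⟪tp f, tp g⟫ = ∏ i, ⟪f i, g i⟫) (φ : Γ →* Perm ι)
    (f h : ι → H) :
    ⟪permAverage φ tp f, permAverage φ tp h⟫
      = (Fintype.card Γ : ℝ)⁻¹ * ∑ g, ∏ i, ⟪f (φ g i), h i⟫ := by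
  have shift : ∀ τ : Γ, ∑ σ, ∏ i, ⟪f (φ σ i), h (φ τ i)⟫ = ∑ ρ, ∏ i, ⟪f (φ ρ i), h i⟫ := by
    intro τ
    refine (Fintype.sum_equiv (Equiv.mulRight τ⁻¹) _ _ fun σ => ?_)
    rw [coe_mulRight, ← Equiv.prod_comp (φ τ) (fun i => ⟪f (φ (σ * τ⁻¹) i), h i⟫)]
    simp
  rw [permAverage, permAverage, real_inner_smul_left, real_inner_smul_right, sum_inner]
  simp only [inner_sum, htp]
  rw [sum_comm, sum_congr rfl fun τ _ => shift τ, sum_const, card_univ, nsmul_eq_mul]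
  field_simp

end Averaging

section BlockAverage

variable {ι κ H T : Type*} [Fintype ι] [DecidableEq ι] [DecidableEq κ] {c : ι → κ}

theorem permAverage_blockStabilizer_subtype [AddCommGroup T] [Module ℝ T] (tp : (ι → H) → T)
    (f : ι → H) :
    permAverage (blockStabilizer c).subtype tp f
      = (Fintype.card (blockStabilizer c) : ℝ)⁻¹ • ∑ σ ∈ univ.filter
          (fun σ : Perm ι => ∀ i, c (σ i) = c i), tp (fun i => f (σ i)) :=
  congrArg _ (sum_blockStabilizer_eq_sum_filter fun σ => tp fun i => f (σ i))

variable [NormedAddCommGroup H] [InnerProductSpace ℝ H] {V : κ → Submodule ℝ H}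

theorem sum_perm_prod_inner_eq_sum_blockStabilizer
    (horth : ∀ j j', j ≠ j' → ∀ x ∈ V j, ∀ y ∈ V j', ⟪x, y⟫ = 0) {f h : ι → H}
    (hf : ∀ i, f i ∈ V (c i)) (hh : ∀ i, h i ∈ V (c i)) :
    ∑ ρ : Perm ι, ∏ i, ⟪f (ρ i), h i⟫
      = ∑ ρ : blockStabilizer c, ∏ i, ⟪f ((ρ : Perm ι) i), h i⟫ := by
  rw [sum_blockStabilizer_eq_sum_filter (fun ρ : Perm ι => ∏ i, ⟪f (ρ i), h i⟫), sum_filter_of_ne]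
  intro ρ _ hne i
  by_contra hi
  exact hne (prod_eq_zero (mem_univ i) (horth _ _ hi _ (hf (ρ i)) _ (hh i)))

variable [NormedAddCommGroup T] [InnerProductSpace ℝ T] {tp : (ι → H) → T}

theorem inner_map_permAverage_blockStabilizer (htp : ∀ f g, ⟪tp f, tp g⟫ = ∏ i, ⟪f i, g i⟫)
    {A : T →ₗ[ℝ] T} (hA : ∀ f, A (tp f) = permAverage (MonoidHom.id (Perm ι)) tp f)
    (horth : ∀ j j', j ≠ j' → ∀ x ∈ V j, ∀ y ∈ V j', ⟪x, y⟫ = 0) {f h : ι → H}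
    (hf : ∀ i, f i ∈ V (c i)) (hh : ∀ i, h i ∈ V (c i)) :
    ⟪A (permAverage (blockStabilizer c).subtype tp f),
        A (permAverage (blockStabilizer c).subtype tp h)⟫
      = (Fintype.card (blockStabilizer c) / Fintype.card (Perm ι) : ℝ)
        * ⟪permAverage (blockStabilizer c).subtype tp f,
            permAverage (blockStabilizer c).subtype tp h⟫ := by
  have hA_comp := map_comp_perm_of_map_eq_permAverage hA
  rw [map_permAverage hA_comp, map_permAverage hA_comp, hA, hA, inner_permAverage htp,
    inner_permAverage htp]
  simp only [MonoidHom.id_apply, Subgroup.coe_subtype]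
  rw [sum_perm_prod_inner_eq_sum_blockStabilizer horth hf hh]
  field_simp

end BlockAverage

theorem statement4_general
    {H T : Type*} [NormedAddCommGroup H] [InnerProductSpace ℝ H]
    [NormedAddCommGroup T] [InnerProductSpace ℝ T] [CompleteSpace T]
    (Hk : ℕ → Submodule ℝ H)
    (horth : ∀ j j', j ≠ j' → ∀ x ∈ Hk j, ∀ y ∈ Hk j', ⟪x, y⟫ = 0)
    (n : ℕ)
    (tp : (Fin n → H) → T)
    (htp : ∀ f g : Fin n → H, ⟪tp f, tp g⟫ = ∏ i, ⟪f i, g i⟫)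
    (Sym : T →L[ℝ] T)
    (hSym : ∀ f : Fin n → H,
      Sym (tp f) = ((n.factorial : ℝ))⁻¹ • ∑ σ : Equiv.Perm (Fin n), tp (fun i => f (σ i)))
    (α : ℕ →₀ ℕ)
    -- a block structure realizing the multiplicities α
    (c : Fin n → ℕ)
    (hc : ∀ j, (Finset.univ.filter fun i => c i = j).card = α j)
    -- the domain: `H_0^{⊙α_0} ⊗ H_1^{⊙α_1} ⊗ ⋯`, spanned by block-symmetrized tensors
    (D : Submodule ℝ T)
    (hD : D = (Submodule.span ℝ {t | ∃ f : Fin n → H, (∀ i, f i ∈ Hk (c i)) ∧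
        t = ((∏ j ∈ α.support, ((α j).factorial : ℝ)))⁻¹ •
          ∑ σ ∈ Finset.univ.filter
              (fun σ : Equiv.Perm (Fin n) => ∀ i, c (σ i) = c i),
            tp (fun i => f (σ i))}).topologicalClosure)
    -- the target: `H_0^{⊙α_0} ⊙ H_1^{⊙α_1} ⊙ ⋯`
    (Tar : Submodule ℝ T)
    (hTar : Tar = (Submodule.span ℝ (Sym ''
        {t | ∃ f : Fin n → H, (∀ i, f i ∈ Hk (c i)) ∧ t = tp f})).topologicalClosure) :
    (∀ u ∈ D, ‖Sym u‖
        = Real.sqrt ((∏ j ∈ α.support, ((α j).factorial : ℝ)) / (n.factorial : ℝ)) * ‖u‖)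
      ∧ Set.InjOn Sym (D : Set T)
      ∧ Sym '' (D : Set T) = (Tar : Set T) := by
  have hP : (∏ j ∈ α.support, ((α j).factorial : ℝ)) = Fintype.card (blockStabilizer c) := by
    rw [card_blockStabilizer hc]; push_cast; rfl
  have hN : (n.factorial : ℝ) = Fintype.card (Perm (Fin n)) := by
    rw [Fintype.card_perm, Fintype.card_fin]
  have hSym_tp : ∀ f, Sym (tp f) = permAverage (MonoidHom.id (Perm (Fin n))) tp f := fun f => by
    rw [hSym, hN]; rfl
  set gens := {t | ∃ f : Fin n → H, (∀ i, f i ∈ Hk (c i)) ∧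
    t = permAverage (blockStabilizer c).subtype tp f}
  have hD_gens : D = (Submodule.span ℝ gens).topologicalClosure := by
    rw [hD]
    simp_rw [gens, permAverage_blockStabilizer_subtype, ← hP]
    -- the two filters carry different, though equal, `Decidable` instances
    congr!
  have hscale : ∀ u ∈ gens, ∀ v ∈ gens, ⟪Sym u, Sym v⟫
      = (Fintype.card (blockStabilizer c) / Fintype.card (Perm (Fin n)) : ℝ) * ⟪u, v⟫ := by
    rintro _ ⟨f, hf, rfl⟩ _ ⟨h, hh, rfl⟩
    exact inner_map_permAverage_blockStabilizer (A := (Sym : T →ₗ[ℝ] T)) htp hSym_tp horth hf hh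
  have hr : 0 < (Fintype.card (blockStabilizer c) / Fintype.card (Perm (Fin n)) : ℝ) := by
    positivity
  have himage : Sym '' gens = Sym '' {t | ∃ f : Fin n → H, (∀ i, f i ∈ Hk (c i)) ∧ t = tp f} :=
    image_map_setOf_permAverage (A := (Sym : T →ₗ[ℝ] T))
      (map_comp_perm_of_map_eq_permAverage hSym_tp) _ {f | ∀ i, f i ∈ Hk (c i)}
  have hnorm := norm_map_of_mem_topologicalClosure_span hr.le hscale
  rw [hP, hN, hTar, hD_gens, ← himage, ← image_topologicalClosure_span hr hscale]
  exact ⟨hnorm, injOn_of_norm_map_eq_mul (Real.sqrt_pos.2 hr).ne' hnorm, rfl⟩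

/-- for a multi-index `α` with `|α| = n`, the restriction of `Sym_n` to the
subspace `H_0^{⊙α_0} ⊗ H_1^{⊙α_1} ⊗ ⋯` of `H^{⊗n}` (realized as the closed span of the
block-symmetrized elementary tensors with block structure `c`) is injective, scales norms
by the constant `(α_0!α_1!⋯/n!)^{1/2}`, and has (closed) image `H_0^{⊙α_0} ⊙ H_1^{⊙α_1} ⊙ ⋯`. -/
theorem statement4
    {H T : Type*} [NormedAddCommGroup H] [InnerProductSpace ℝ H]
    [CompleteSpace H] [TopologicalSpace.SeparableSpace H]
    [NormedAddCommGroup T] [InnerProductSpace ℝ T] [CompleteSpace T]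
    (Hk : ℕ → Submodule ℝ H)
    (hclosed : ∀ j, IsClosed (Hk j : Set H))
    (horth : ∀ j j', j ≠ j' → ∀ x ∈ Hk j, ∀ y ∈ Hk j', ⟪x, y⟫ = 0)
    (htotal : (⨆ j, Hk j).topologicalClosure = ⊤)
    (n : ℕ)
    (tp : (Fin n → H) → T)
    (htp : ∀ f g : Fin n → H, ⟪tp f, tp g⟫ = ∏ i, ⟪f i, g i⟫)
    (htptotal : (Submodule.span ℝ (Set.range tp)).topologicalClosure = ⊤)
    (Sym : T →L[ℝ] T)
    (hSym : ∀ f : Fin n → H,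
      Sym (tp f) = ((n.factorial : ℝ))⁻¹ • ∑ σ : Equiv.Perm (Fin n), tp (fun i => f (σ i)))
    (α : ℕ →₀ ℕ) (hα : (α.sum fun _ m => m) = n)
    -- a block structure realizing the multiplicities α
    (c : Fin n → ℕ)
    (hc : ∀ j, (Finset.univ.filter fun i => c i = j).card = α j)
    -- the domain: `H_0^{⊙α_0} ⊗ H_1^{⊙α_1} ⊗ ⋯`, spanned by block-symmetrized tensors
    (D : Submodule ℝ T)
    (hD : D = (Submodule.span ℝ {t | ∃ f : Fin n → H, (∀ i, f i ∈ Hk (c i)) ∧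
        t = ((∏ j ∈ α.support, ((α j).factorial : ℝ)))⁻¹ •
          ∑ σ ∈ Finset.univ.filter
              (fun σ : Equiv.Perm (Fin n) => ∀ i, c (σ i) = c i),
            tp (fun i => f (σ i))}).topologicalClosure)
    -- the target: `H_0^{⊙α_0} ⊙ H_1^{⊙α_1} ⊙ ⋯`
    (Tar : Submodule ℝ T)
    (hTar : Tar = (Submodule.span ℝ (Sym ''
        {t | ∃ f : Fin n → H, (∀ i, f i ∈ Hk (c i)) ∧ t = tp f})).topologicalClosure) :
    (∀ u ∈ D, ‖Sym u‖
        = Real.sqrt ((∏ j ∈ α.support, ((α j).factorial : ℝ)) / (n.factorial : ℝ)) * ‖u‖)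
      ∧ Set.InjOn Sym (D : Set T)
      ∧ Sym '' (D : Set T) = (Tar : Set T) :=
  statement4_general Hk horth n tp htp Sym hSym α c hc D hD Tar hTar
end

section
/- Let H be a real separable Hilbert space, f_i, g_i ∈ H for i ≥ 0 with f_i, g_i in mutually orthogonal closed subspaces H_i, and let α = (α_0, α_1, ...) be a multi-index with |α| = n. Then ⟨Sym_n(f_0^{⊗α_0} ⊗ f_1^{⊗α_1} ⊗ ···), Sym_n(g_0^{⊗α_0} ⊗ g_1^{⊗α_1} ⊗ ···)⟩_{H^{⊗n}} = (1/n!) Π_{i≥0} α_i! ⟨f_i, g_i⟩^{α_i}. -/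
open scoped RealInnerProductSpace Nat
open Finset

/-! Expanding both symmetrizations turns the inner product into `(n!)⁻²` times a double sum over
pairs of permutations `(σ, τ)` of `∏ i ⟪f (c (σ i)), g (c (τ i))⟫`. By orthogonality a term
vanishes unless `c ∘ σ = c ∘ τ`, and then it equals `∏_j ⟪f j, g j⟫ ^ α j`. For each `σ` the
admissible `τ` form a coset of the stabilizer of `c`, which has `∏_j (α j)!` elements. -/

section PermutationCounting

variable {ι κ : Type*} [Fintype ι] [DecidableEq ι] [DecidableEq κ]

theorem card_perm_comp_eq_comp (c : ι → κ) (σ : Equiv.Perm ι) :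
    #{τ : Equiv.Perm ι | c ∘ τ = c ∘ σ}
      = ∏ j ∈ univ.image c, (#{i | c i = j})! := by
  have hcoset : #{τ : Equiv.Perm ι | c ∘ τ = c ∘ σ}
      = Fintype.card {π : Equiv.Perm ι // c ∘ π = c} := by
    rw [← Fintype.card_subtype]
    refine Fintype.card_congr (Equiv.subtypeEquiv (Equiv.mulRight σ⁻¹) fun τ => ?_)
    constructor
    · intro h
      funext i
      simpa using congrFun h (σ⁻¹ i)
    · intro h
      funext i
      simpa using congrFun h (σ i)
  rw [hcoset, DomMulAct.stabilizer_card']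
  simp only [Fintype.card_subtype]

end PermutationCounting

section OrthogonalFamilies

variable {ι κ H : Type*} [Fintype ι] [DecidableEq κ] [NormedAddCommGroup H] [InnerProductSpace ℝ H]

theorem prod_inner_comp_perm (c : ι → κ) {f g : κ → H}
    (horth : ∀ j j', j ≠ j' → ⟪f j, g j'⟫ = 0) (σ τ : Equiv.Perm ι) :
    ∏ i, ⟪f (c (σ i)), g (c (τ i))⟫
      = if c ∘ τ = c ∘ σ then ∏ j ∈ univ.image c, ⟪f j, g j⟫ ^ #{i | c i = j} else 0 := by
  split_ifs with h
  · calc ∏ i, ⟪f (c (σ i)), g (c (τ i))⟫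
        = ∏ i, ⟪f (c (σ i)), g (c (σ i))⟫ :=
          prod_congr rfl fun i _ => by rw [show c (τ i) = c (σ i) from congrFun h i]
      _ = ∏ i, ⟪f (c i), g (c i)⟫ := Equiv.prod_comp σ fun i => ⟪f (c i), g (c i)⟫
      _ = _ := prod_comp (fun j => ⟪f j, g j⟫) c
  · obtain ⟨i, hi⟩ : ∃ i, c (σ i) ≠ c (τ i) := by
      by_contra! h'
      exact h (funext fun i => (h' i).symm)
    exact prod_eq_zero (mem_univ i) (horth _ _ hi)

theorem sum_sum_prod_inner_comp_perm [DecidableEq ι] (c : ι → κ) {f g : κ → H}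
    (horth : ∀ j j', j ≠ j' → ⟪f j, g j'⟫ = 0) :
    ∑ σ : Equiv.Perm ι, ∑ τ : Equiv.Perm ι, ∏ i, ⟪f (c (σ i)), g (c (τ i))⟫
      = (Fintype.card ι)! *
          ∏ j ∈ univ.image c, ((#{i | c i = j})! * ⟪f j, g j⟫ ^ #{i | c i = j}) := by
  simp only [prod_inner_comp_perm c horth, sum_ite, sum_const_zero, add_zero, sum_const,
    card_perm_comp_eq_comp, nsmul_eq_mul, card_univ, Fintype.card_perm, prod_mul_distrib]
  push_cast
  ring

end OrthogonalFamilies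

theorem inner_symmetrization_tensor {H T : Type*} [NormedAddCommGroup H] [InnerProductSpace ℝ H]
    [NormedAddCommGroup T] [InnerProductSpace ℝ T] {n : ℕ} {tp : (Fin n → H) → T}
    (htp : ∀ f g : Fin n → H, ⟪tp f, tp g⟫ = ∏ i, ⟪f i, g i⟫) {Sym : T →L[ℝ] T}
    (hSym : ∀ f : Fin n → H,
      Sym (tp f) = ((n ! : ℝ))⁻¹ • ∑ σ : Equiv.Perm (Fin n), tp (fun i => f (σ i)))
    (u v : Fin n → H) :
    ⟪Sym (tp u), Sym (tp v)⟫
      = ((n ! : ℝ))⁻¹ ^ 2 *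
          ∑ σ : Equiv.Perm (Fin n), ∑ τ : Equiv.Perm (Fin n), ∏ i, ⟪u (σ i), v (τ i)⟫ := by
  simp only [hSym, real_inner_smul_left, real_inner_smul_right, sum_inner, inner_sum, htp]
  rw [← mul_sum, sum_comm]
  ring

theorem statement6_general
    {H T : Type*} [NormedAddCommGroup H] [InnerProductSpace ℝ H]
    [NormedAddCommGroup T] [InnerProductSpace ℝ T]
    (Hk : ℕ → Submodule ℝ H)
    (horth : ∀ j j', j ≠ j' → ∀ x ∈ Hk j, ∀ y ∈ Hk j', ⟪x, y⟫ = 0)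
    (n : ℕ)
    (tp : (Fin n → H) → T)
    (htp : ∀ f g : Fin n → H, ⟪tp f, tp g⟫ = ∏ i, ⟪f i, g i⟫)
    (Sym : T →L[ℝ] T)
    (hSym : ∀ f : Fin n → H,
      Sym (tp f) = ((n.factorial : ℝ))⁻¹ • ∑ σ : Equiv.Perm (Fin n), tp (fun i => f (σ i)))
    (α : ℕ →₀ ℕ)
    -- a block structure realizing the multiplicities α (so that
    -- `fun i => f (c i)` is the tensor `f_0^{⊗α_0} ⊗ f_1^{⊗α_1} ⊗ ⋯`)
    (c : Fin n → ℕ)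
    (hc : ∀ j, (Finset.univ.filter fun i => c i = j).card = α j)
    (f g : ℕ → H)
    (hf : ∀ j, f j ∈ Hk j) (hg : ∀ j, g j ∈ Hk j) :
    ⟪Sym (tp (fun i => f (c i))), Sym (tp (fun i => g (c i)))⟫
      = ((n.factorial : ℝ))⁻¹ *
          ∏ j ∈ α.support, (((α j).factorial : ℝ) * ⟪f j, g j⟫ ^ (α j)) := by
  have himage : univ.image c = α.support := by
    ext j
    rw [Finsupp.mem_support_iff, ← hc j, Ne, card_eq_zero, ← Ne, ← nonempty_iff_ne_empty,
      filter_nonempty_iff]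
    simp
  have hfg : ∀ j j', j ≠ j' → ⟪f j, g j'⟫ = 0 := fun j j' h => horth j j' h _ (hf j) _ (hg j')
  rw [inner_symmetrization_tensor htp hSym, sum_sum_prod_inner_comp_perm c hfg, himage,
    Fintype.card_fin]
  simp only [hc]
  field_simp

/-- for vectors `f_i, g_i` in mutually orthogonal closed subspaces `H_i` and a
multi-index `α` with `|α| = n`,
`⟪Sym_n(f_0^{⊗α_0} ⊗ f_1^{⊗α_1} ⊗ ⋯), Sym_n(g_0^{⊗α_0} ⊗ g_1^{⊗α_1} ⊗ ⋯)⟫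
  = (1/n!) Π_i α_i! ⟪f_i, g_i⟫^{α_i}`. -/
theorem statement6
    {H T : Type*} [NormedAddCommGroup H] [InnerProductSpace ℝ H]
    [CompleteSpace H] [TopologicalSpace.SeparableSpace H]
    [NormedAddCommGroup T] [InnerProductSpace ℝ T] [CompleteSpace T]
    (Hk : ℕ → Submodule ℝ H)
    (hclosed : ∀ j, IsClosed (Hk j : Set H))
    (horth : ∀ j j', j ≠ j' → ∀ x ∈ Hk j, ∀ y ∈ Hk j', ⟪x, y⟫ = 0)
    (n : ℕ)
    (tp : (Fin n → H) → T)
    (htp : ∀ f g : Fin n → H, ⟪tp f, tp g⟫ = ∏ i, ⟪f i, g i⟫)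
    (Sym : T →L[ℝ] T)
    (hSym : ∀ f : Fin n → H,
      Sym (tp f) = ((n.factorial : ℝ))⁻¹ • ∑ σ : Equiv.Perm (Fin n), tp (fun i => f (σ i)))
    (α : ℕ →₀ ℕ) (hα : (α.sum fun _ m => m) = n)
    -- a block structure realizing the multiplicities α (so that
    -- `fun i => f (c i)` is the tensor `f_0^{⊗α_0} ⊗ f_1^{⊗α_1} ⊗ ⋯`)
    (c : Fin n → ℕ)
    (hc : ∀ j, (Finset.univ.filter fun i => c i = j).card = α j)
    (f g : ℕ → H)
    (hf : ∀ j, f j ∈ Hk j) (hg : ∀ j, g j ∈ Hk j) :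
    ⟪Sym (tp (fun i => f (c i))), Sym (tp (fun i => g (c i)))⟫
      = ((n.factorial : ℝ))⁻¹ *
          ∏ j ∈ α.support, (((α j).factorial : ℝ) * ⟪f j, g j⟫ ^ (α j)) :=
  statement6_general Hk horth n tp htp Sym hSym α c hc f g hf hg
end
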